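/- Let g : [0,1] → [0,∞) be Lebesgue-integrable and let f : [0,∞) → [0,∞) be defined by f(x) = ∫_{[0,1]} g(t)·(1 !_t x) dm(t), where m is Lebesgue measure on [0,1]. Then f is symmetric, i.e. f(x) = x·f(1/x) for all x ∈ (0,∞), if and only if g(1-t) = g(t) for m-almost every t ∈ [0,1]. -/

import Mathlib

open MeasureTheory Real

/-- The `t`-weighted harmonic mean `1 !_t x` of `1` and `x`, for `t ∈ [0,1]`, `x ∈ [0,∞)`. -/
noncomputable def whm (t x : ℝ) : ℝ :=
  if t = 0 ∧ x = 0 then 1 else x / ((1 - t) * x + t)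

/-- Lebesgue measure `m` on the unit interval `[0,1]`. -/
noncomputable def lebIcc : Measure (Set.Icc (0 : ℝ) 1) :=
  (volume : Measure ℝ).comap Subtype.val

/-- The map `Θ : [0,1] → [0,1]`, `t ↦ 1 - t`. -/
noncomputable def theta (t : Set.Icc (0 : ℝ) 1) : Set.Icc (0 : ℝ) 1 :=
  ⟨1 - (t : ℝ), Set.mem_Icc.mpr
    ⟨by linarith [(Set.mem_Icc.mp t.2).2], by linarith [(Set.mem_Icc.mp t.2).1]⟩⟩

/-!
Since `x · (1 !_t (1/x)) = 1 !_{1-t} x`, substituting `t ↦ 1 - t` gives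
`x · f (1/x) = ∫ g (1 - t) · (1 !_t x) dt`, so `f` is symmetric iff `h = g - g ∘ Θ` integrates to
zero against every kernel `t ↦ 1 !_t x`, `x > 0`. For `x = 1/(1+y)` this kernel is `1/(1 + t y)`;
expanding it in powers of `y ∈ (0,1)`, uniqueness of power series coefficients forces every moment
`∫ tⁿ h` to vanish. By Weierstrass approximation `h` then integrates to zero against every
continuous function, hence `h = 0` almost everywhere.
-/

open Set Filter Topology

theorem eq_zero_of_hasSum_mul_pow_eq_zero {a : ℕ → ℝ} {C : ℝ} (ha : ∀ n, |a n| ≤ C)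
    (h : ∀ y ∈ Ioo (0 : ℝ) 1, HasSum (fun n => a n * y ^ n) 0) : a = 0 := by
  set p := FormalMultilinearSeries.ofScalars ℝ a
  have hr : ((1 : NNReal) : ENNReal) ≤ p.radius :=
    p.le_radius_of_bound C fun n => by
      simpa [p, FormalMultilinearSeries.ofScalars_norm] using ha n
  have hp : HasFPowerSeriesAt p.sum p 0 :=
    (p.hasFPowerSeriesOnBall (lt_of_lt_of_le (by simp) hr)).hasFPowerSeriesAt
  have hzero : ∀ᶠ y in 𝓝[>] 0, p.sum y = 0 := by
    filter_upwards [Ioo_mem_nhdsGT (zero_lt_one' ℝ)] with y hy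
    simpa [p, FormalMultilinearSeries.sum, FormalMultilinearSeries.ofScalars_apply_eq,
      mul_comm] using (h y hy).tsum_eq
  have hloc : ∀ᶠ y in 𝓝 0, p.sum y = 0 :=
    hp.analyticAt.frequently_zero_iff_eventually_zero.mp
      (hzero.frequently.filter_mono (nhdsGT_le_nhdsNE 0))
  simpa [p] using hp.locally_zero_iff.mp hloc

lemma abs_pow_mul_le_abs {t : ℝ} (ht : t ∈ Icc (0 : ℝ) 1) (n : ℕ) (c : ℝ) :
    |t ^ n * c| ≤ |c| := by
  rw [abs_mul, abs_pow, abs_of_nonneg ht.1]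
  exact mul_le_of_le_one_left (abs_nonneg c) (pow_le_one₀ ht.1 ht.2)

section Moments

variable {h : ℝ → ℝ}

lemma integrableOn_pow_mul (hh : IntegrableOn h (Icc 0 1)) (n : ℕ) :
    IntegrableOn (fun t => t ^ n * h t) (Icc 0 1) :=
  hh.continuousOn_mul (continuous_pow n).continuousOn isCompact_Icc

lemma abs_integral_pow_mul_le (hh : IntegrableOn h (Icc 0 1)) (n : ℕ) :
    |∫ t in Icc 0 1, t ^ n * h t| ≤ ∫ t in Icc 0 1, |h t| :=
  norm_integral_le_of_norm_le (f := fun t => t ^ n * h t) hh.abs <|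
    (ae_restrict_mem measurableSet_Icc).mono fun t ht => abs_pow_mul_le_abs ht n (h t)

lemma hasSum_integral_div_one_add_mul (hh : IntegrableOn h (Icc 0 1)) {y : ℝ}
    (hy : y ∈ Ico (0 : ℝ) 1) :
    HasSum (fun n => (-y) ^ n * ∫ t in Icc 0 1, t ^ n * h t)
      (∫ t in Icc 0 1, h t / (1 + t * y)) := by
  have hsum : ∀ t ∈ Icc (0 : ℝ) 1, ∑' n, (-y) ^ n * (t ^ n * h t) = h t / (1 + t * y) := by
    intro t ht
    have hty : |-(t * y)| < 1 := by
      rw [abs_neg, abs_of_nonneg (mul_nonneg ht.1 hy.1)]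
      nlinarith [mul_le_mul_of_nonneg_right ht.2 hy.1, hy.2]
    have hterm : ∀ n : ℕ, (-y) ^ n * (t ^ n * h t) = (-(t * y)) ^ n * h t := fun n => by ring
    rw [tsum_congr hterm, tsum_mul_right, tsum_geometric_of_abs_lt_one hty, div_eq_mul_inv,
      sub_neg_eq_add, mul_comm]
  have hnorm : Summable fun n => ∫ t in Icc 0 1, ‖(-y) ^ n * (t ^ n * h t)‖ := by
    refine Summable.of_nonneg_of_le (fun n => integral_nonneg fun t => norm_nonneg _)
      (fun n => ?_) ((summable_geometric_of_lt_one hy.1 hy.2).mul_right (∫ t in Icc 0 1, |h t|))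
    calc ∫ t in Icc 0 1, ‖(-y) ^ n * (t ^ n * h t)‖ ≤ ∫ t in Icc 0 1, y ^ n * |h t| :=
          setIntegral_mono_on ((integrableOn_pow_mul hh n).const_mul _).norm
            (hh.abs.const_mul _) measurableSet_Icc fun t ht => by
            rw [norm_mul, norm_pow, norm_neg, Real.norm_of_nonneg hy.1, Real.norm_eq_abs]
            exact mul_le_mul_of_nonneg_left (abs_pow_mul_le_abs ht n _) (pow_nonneg hy.1 n)
      _ = y ^ n * ∫ t in Icc 0 1, |h t| := integral_const_mul _ _
  simpa only [integral_const_mul, setIntegral_congr_fun measurableSet_Icc hsum] using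
    hasSum_integral_of_summable_integral_norm
      (fun n => (integrableOn_pow_mul hh n).const_mul ((-y) ^ n)) hnorm

lemma integral_pow_mul_eq_zero_of_integral_div_one_add_mul_eq_zero
    (hh : IntegrableOn h (Icc 0 1))
    (h0 : ∀ y ∈ Ioo (0 : ℝ) 1, ∫ t in Icc 0 1, h t / (1 + t * y) = 0) (n : ℕ) :
    ∫ t in Icc 0 1, t ^ n * h t = 0 := by
  have hcoeff := eq_zero_of_hasSum_mul_pow_eq_zero
    (a := fun n => (-1) ^ n * ∫ t in Icc 0 1, t ^ n * h t)
    (fun n => by simpa using abs_integral_pow_mul_le hh n) fun y hy => by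
      have hs := hasSum_integral_div_one_add_mul hh (Ioo_subset_Ico_self hy)
      rw [h0 y hy] at hs
      convert hs using 2 with n
      rw [neg_pow]
      ring
  simpa using congr_fun hcoeff n

lemma integral_polynomial_mul_eq_zero (hh : IntegrableOn h (Icc 0 1))
    (hm : ∀ n : ℕ, ∫ t in Icc 0 1, t ^ n * h t = 0) (p : Polynomial ℝ) :
    ∫ t in Icc 0 1, p.eval t * h t = 0 := by
  simp_rw [Polynomial.eval_eq_sum_range, Finset.sum_mul, mul_assoc]
  rw [integral_finsetSum _ fun i _ => (integrableOn_pow_mul hh i).const_mul _]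
  exact Finset.sum_eq_zero fun i _ => by rw [integral_const_mul, hm, mul_zero]

lemma integral_mul_eq_zero_of_integral_pow_mul_eq_zero (hh : IntegrableOn h (Icc 0 1))
    (hm : ∀ n : ℕ, ∫ t in Icc 0 1, t ^ n * h t = 0) {φ : ℝ → ℝ}
    (hφ : ContinuousOn φ (Icc 0 1)) : ∫ t in Icc 0 1, φ t * h t = 0 := by
  set M := ∫ t in Icc 0 1, |h t|
  have hM : 0 ≤ M := integral_nonneg fun t => abs_nonneg _
  refine eq_of_forall_dist_le fun ε hε => ?_
  obtain ⟨p, hp⟩ := exists_polynomial_near_of_continuousOn 0 1 φ hφ (ε / (M + 1)) (by positivity)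
  have hpi : IntegrableOn (fun t => p.eval t * h t) (Icc 0 1) :=
    hh.continuousOn_mul p.continuous.continuousOn isCompact_Icc
  have hφi : IntegrableOn (fun t => φ t * h t) (Icc 0 1) :=
    hh.continuousOn_mul hφ isCompact_Icc
  calc dist (∫ t in Icc 0 1, φ t * h t) 0
      = ‖∫ t in Icc 0 1, (φ t * h t - p.eval t * h t)‖ := by
        rw [integral_sub hφi hpi, integral_polynomial_mul_eq_zero hh hm, sub_zero, dist_zero_right]
    _ ≤ ∫ t in Icc 0 1, ε / (M + 1) * |h t| := by
        refine norm_integral_le_of_norm_le (hh.abs.const_mul _)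
          ((ae_restrict_mem measurableSet_Icc).mono fun t ht => ?_)
        rw [← sub_mul, norm_mul, Real.norm_eq_abs, Real.norm_eq_abs, abs_sub_comm]
        exact mul_le_mul_of_nonneg_right (hp t ht).le (abs_nonneg _)
    _ = ε / (M + 1) * M := integral_const_mul _ _
    _ ≤ ε := by
        rw [div_mul_eq_mul_div, div_le_iff₀ (by positivity)]
        nlinarith

lemma ae_eq_zero_of_integral_pow_mul_eq_zero (hh : IntegrableOn h (Icc 0 1))
    (hm : ∀ n : ℕ, ∫ t in Icc 0 1, t ^ n * h t = 0) :
    ∀ᵐ t ∂volume.restrict (Icc 0 1), h t = 0 :=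
  ae_eq_zero_of_integral_contDiff_smul_eq_zero hh.locallyIntegrable fun _ hφ _ =>
    integral_mul_eq_zero_of_integral_pow_mul_eq_zero hh hm hφ.continuous.continuousOn

end Moments

lemma whm_of_ne_zero (t : ℝ) {x : ℝ} (hx : x ≠ 0) : whm t x = x / ((1 - t) * x + t) :=
  if_neg fun h => hx h.2

lemma mul_whm_one_div (t : ℝ) {x : ℝ} (hx : x ≠ 0) : x * whm t (1 / x) = whm (1 - t) x := by
  have hden : (1 - t) * (1 / x) + t = ((1 - (1 - t)) * x + (1 - t)) / x := by
    field_simp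
    ring
  rw [whm_of_ne_zero _ (one_div_ne_zero hx), whm_of_ne_zero _ hx, hden, div_div_eq_mul_div,
    mul_div_assoc', one_div_mul_cancel hx, mul_one]

lemma whm_inv_one_add (t : ℝ) {y : ℝ} (hy : 1 + y ≠ 0) : whm t (1 + y)⁻¹ = (1 + t * y)⁻¹ := by
  have hden : (1 - t) * (1 + y)⁻¹ + t = (1 + t * y) / (1 + y) := by
    field_simp
    ring
  rw [whm_of_ne_zero _ (inv_ne_zero hy), hden, div_div_eq_mul_div, inv_mul_cancel₀ hy, one_div]

lemma continuousOn_whm {x : ℝ} (hx : 0 < x) : ContinuousOn (fun t => whm t x) (Icc 0 1) := by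
  simp_rw [whm_of_ne_zero _ hx.ne']
  refine continuousOn_const.div (by fun_prop) fun t ht => ?_
  nlinarith [mul_nonneg (sub_nonneg.2 ht.2) hx.le, ht.1]

theorem forall_integral_mul_whm_eq_zero_iff {h : ℝ → ℝ} (hh : IntegrableOn h (Icc 0 1)) :
    (∀ x > 0, ∫ t in Icc 0 1, h t * whm t x = 0) ↔ ∀ᵐ t ∂volume.restrict (Icc 0 1), h t = 0 := by
  refine ⟨fun h0 => ae_eq_zero_of_integral_pow_mul_eq_zero hh ?_, fun h0 x _ => ?_⟩
  · refine integral_pow_mul_eq_zero_of_integral_div_one_add_mul_eq_zero hh fun y hy => ?_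
    have hy' : 1 + y ≠ 0 := by linarith [hy.1]
    simpa only [whm_inv_one_add _ hy', div_eq_mul_inv] using
      h0 (1 + y)⁻¹ (inv_pos.2 (by linarith [hy.1]))
  · exact integral_eq_zero_of_ae (h0.mono fun t ht => by simp [ht])

lemma measurePreserving_one_sub_Icc :
    MeasurePreserving (fun t : ℝ => 1 - t) (volume.restrict (Icc 0 1))
      (volume.restrict (Icc 0 1)) := by
  simpa using (Measure.measurePreserving_sub_left volume (1 : ℝ)).restrict_preimage
    (measurableSet_Icc (a := 0) (b := 1))

lemma integral_Icc_comp_one_sub (F : ℝ → ℝ) :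
    ∫ t in Icc 0 1, F (1 - t) = ∫ t in Icc 0 1, F t :=
  measurePreserving_one_sub_Icc.integral_comp (Homeomorph.subLeft (1 : ℝ)).measurableEmbedding F

lemma MeasureTheory.IntegrableOn.comp_one_sub {F : ℝ → ℝ} (hF : IntegrableOn F (Icc 0 1)) :
    IntegrableOn (fun t => F (1 - t)) (Icc 0 1) :=
  (measurePreserving_one_sub_Icc.integrable_comp_emb
    (Homeomorph.subLeft (1 : ℝ)).measurableEmbedding).mpr hF

lemma integral_lebIcc (F : ℝ → ℝ) : ∫ t, F t ∂lebIcc = ∫ t in Icc 0 1, F t :=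
  integral_subtype_comap measurableSet_Icc F

lemma integrable_lebIcc_iff {F : ℝ → ℝ} :
    Integrable (fun t : Icc (0 : ℝ) 1 => F t) lebIcc ↔ IntegrableOn F (Icc 0 1) :=
  (integrableOn_iff_comap_subtypeVal measurableSet_Icc).symm

lemma ae_lebIcc_iff {P : ℝ → Prop} :
    (∀ᵐ t : Icc (0 : ℝ) 1 ∂lebIcc, P t) ↔ ∀ᵐ t : ℝ ∂volume.restrict (Icc 0 1), P t :=
  (ae_restrict_iff_subtype measurableSet_Icc).symm

theorem stmt19_general (g : Set.Icc (0 : ℝ) 1 → ℝ)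
    (hgi : Integrable g lebIcc) (f : ℝ → ℝ)
    (hf : ∀ x : ℝ, 0 ≤ x → f x = ∫ t, g t * whm (t : ℝ) x ∂lebIcc) :
    (∀ x : ℝ, 0 < x → f x = x * f (1 / x)) ↔ ∀ᵐ t ∂lebIcc, g (theta t) = g t := by
  obtain ⟨G, rfl⟩ : ∃ G : ℝ → ℝ, g = fun t : Icc (0 : ℝ) 1 => G t :=
    ⟨Function.extend Subtype.val g 0,
      funext fun t => (Subtype.val_injective.extend_apply g 0 t).symm⟩
  rw [integrable_lebIcc_iff] at hgi
  have hf_eq : ∀ x > 0, f x = ∫ t in Icc 0 1, G t * whm t x := fun x hx => by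
    rw [hf x hx.le, integral_lebIcc (fun t => G t * whm t x)]
  have hf_inv : ∀ x > 0, x * f (1 / x) = ∫ t in Icc 0 1, G (1 - t) * whm t x := by
    intro x hx
    rw [hf_eq _ (one_div_pos.2 hx), ← integral_const_mul, ← integral_Icc_comp_one_sub]
    congr with t
    rw [mul_left_comm, mul_whm_one_div _ hx.ne', sub_sub_cancel]
  have hsymm : (∀ x : ℝ, 0 < x → f x = x * f (1 / x)) ↔
      ∀ x > 0, ∫ t in Icc 0 1, (G t - G (1 - t)) * whm t x = 0 := by
    refine forall₂_congr fun x hx => ?_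
    rw [hf_eq x hx, hf_inv x hx, ← sub_eq_zero,
      ← integral_sub (hgi.mul_continuousOn (continuousOn_whm hx) isCompact_Icc)
        (hgi.comp_one_sub.mul_continuousOn (continuousOn_whm hx) isCompact_Icc)]
    simp only [sub_mul]
  rw [hsymm, forall_integral_mul_whm_eq_zero_iff (h := fun t => G t - G (1 - t))
    (hgi.sub hgi.comp_one_sub)]
  refine Iff.trans ?_ (ae_lebIcc_iff (P := fun t => G (1 - t) = G t)).symm
  exact eventually_congr (.of_forall fun t => by rw [sub_eq_zero, eq_comm])

theorem stmt19 (g : Set.Icc (0 : ℝ) 1 → ℝ) (hg0 : ∀ t, 0 ≤ g t)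
    (hgi : Integrable g lebIcc) (f : ℝ → ℝ)
    (hf : ∀ x : ℝ, 0 ≤ x → f x = ∫ t, g t * whm (t : ℝ) x ∂lebIcc) :
    (∀ x : ℝ, 0 < x → f x = x * f (1 / x)) ↔ ∀ᵐ t ∂lebIcc, g (theta t) = g t :=
  stmt19_general g hgi f hf
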